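/- arXiv:math/0310260 — 7 statements merged into one kernel-verified Lean document; each statement's English description precedes it below -/
import Mathlib

section
/- Let A be a commutative ring and let x = (x_1, …, x_n) be an element of the product ring A^n, viewed as an A-algebra via the diagonal morphism A → A^n. Then x generates A^n as an A-algebra (i.e. the A-subalgebra generated by x is all of A^n) if and only if the Vandermonde determinant ∏_{i<j} (x_j − x_i) is invertible in A. -/
universe u

/-!
If `x` generates `A^n`, then `aeval x : A[X] → A^n` is onto, so some polynomial `p` takes the
value `1` at `x j` and `0` at `x i`; as `x j - x i` divides `p (x j) - p (x i) = 1`, it is a unit.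
Conversely, `aeval x` sends a polynomial of degree `< n` with coefficient vector `c` to
`vandermonde x *ᵥ c`, which is onto as soon as the Vandermonde matrix is invertible.
-/

open Polynomial Matrix

variable {A : Type*} [CommRing A]

theorem isUnit_sub_of_surjective_aeval {ι : Type*} {x : ι → A}
    (hx : Function.Surjective (aeval (R := A) x)) {i j : ι} (hij : i ≠ j) :
    IsUnit (x j - x i) := by
  classical
  obtain ⟨p, hp⟩ := hx (Pi.single j 1)
  have hpj : p.eval (x j) = 1 := by simpa using congrFun hp j
  have hpi : p.eval (x i) = 0 := by simpa [hij] using congrFun hp i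
  refine isUnit_of_dvd_one ?_
  simpa [hpj, hpi] using sub_dvd_eval_sub (x j) (x i) p

theorem aeval_sum_C_mul_X_pow_eq_vandermonde_mulVec {n : ℕ} (x c : Fin n → A) :
    aeval x (∑ k : Fin n, C (c k) * X ^ (k : ℕ)) = vandermonde x *ᵥ c := by
  ext i
  simp only [aeval_fn_apply, coe_aeval_eq_eval, eval_finsetSum, eval_mul, eval_C, eval_pow,
    eval_X, mulVec, dotProduct, vandermonde_apply, mul_comm]

theorem surjective_aeval_of_isUnit_det_vandermonde {n : ℕ} {x : Fin n → A}
    (hx : IsUnit (vandermonde x).det) : Function.Surjective (aeval (R := A) x) := fun y =>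
  ⟨∑ k : Fin n, C (((vandermonde x)⁻¹ *ᵥ y) k) * X ^ (k : ℕ), by
    rw [aeval_sum_C_mul_X_pow_eq_vandermonde_mulVec, mulVec_mulVec, mul_nonsing_inv _ hx,
      one_mulVec]⟩

theorem surjective_aeval_iff_isUnit_det_vandermonde {n : ℕ} (x : Fin n → A) :
    Function.Surjective (aeval (R := A) x) ↔ IsUnit (vandermonde x).det := by
  refine ⟨fun hx => ?_, surjective_aeval_of_isUnit_det_vandermonde⟩
  rw [det_vandermonde, IsUnit.prod_iff]
  intro i _
  rw [IsUnit.prod_iff]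
  exact fun j hj => isUnit_sub_of_surjective_aeval hx (Finset.mem_Ioi.1 hj).ne

/-- An element `x = (x 1, …, x n)` of the product ring `A^n` (with the diagonal
`A`-algebra structure) generates `A^n` as an `A`-algebra if and only if the
Vandermonde determinant `∏_{i<j} (x j - x i)` is invertible in `A`. -/
theorem adjoin_eq_top_iff_isUnit_vandermonde {A : Type u} [CommRing A] {n : ℕ}
    (x : Fin n → A) :
    Algebra.adjoin A {x} = ⊤ ↔
      IsUnit (∏ i : Fin n, ∏ j ∈ Finset.univ.filter (fun j => i < j), (x j - x i)) := by
  have filter_lt_eq_Ioi (i : Fin n) : Finset.univ.filter (fun j => i < j) = Finset.Ioi i := by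
    ext; simp
  simp only [filter_lt_eq_Ioi, ← det_vandermonde]
  rw [Algebra.adjoin_singleton_eq_range_aeval, AlgHom.range_eq_top,
    surjective_aeval_iff_isUnit_det_vandermonde]
end

section
/- For every commutative ring A and every natural number n, the diagonal A-algebra A^n is locally simple: there exists a faithfully flat commutative A-algebra A' such that A' ⊗_A A^n is generated by a single element as an A'-algebra. (Concretely, one may take A' = A[X_1, …, X_n] localized at the Vandermonde element ∏_{i<j}(X_j − X_i).) -/
/-!
Over `A' = A[X_1, …, X_n][1/D]`, with `D` the Vandermonde determinant of the `X_i`, the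
differences `X_i - X_j` become units, so `y = (X_1, …, X_n) ∈ A'^n` generates
`A'^n ≅ A' ⊗_A A^n`: `∏_{j ≠ i} (y - X_j)` is a unit multiple of the `i`-th idempotent. `A'` is faithfully flat over
`A` because it is flat and `D` survives modulo every prime `p` (its image is the Vandermonde
determinant over the domain `A ⧸ p`), which gives a prime of `A'` above `p`.
-/

open TensorProduct

universe u

/-- An `A`-algebra `B` is *simple* (monogenic) if it is generated by a single element,
and *locally simple* if there is a faithfully flat commutative `A`-algebra `A'` such that
`A' ⊗[A] B` is a simple `A'`-algebra. -/
def Algebra.IsLocallySimple (A B : Type u) [CommRing A] [CommRing B] [Algebra A B] : Prop :=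
  ∃ (A' : Type u) (_ : CommRing A') (_ : Algebra A A'),
    Module.FaithfullyFlat A A' ∧ ∃ x : A' ⊗[A] B, Algebra.adjoin A' {x} = ⊤

theorem Matrix.sub_dvd_det_vandermonde {R : Type*} [CommRing R] {n : ℕ} (v : Fin n → R)
    {i j : Fin n} (hij : i ≠ j) : v i - v j ∣ (vandermonde v).det := by
  have key : ∀ {i j : Fin n}, i < j → v j - v i ∣ (vandermonde v).det := fun {i j} h => by
    rw [det_vandermonde]
    exact (Finset.dvd_prod_of_mem _ (Finset.mem_Ioi.mpr h)).trans
      (Finset.dvd_prod_of_mem (fun i => ∏ j ∈ Finset.Ioi i, (v j - v i)) (Finset.mem_univ i))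
  rcases hij.lt_or_gt with h | h
  · rw [← neg_sub, neg_dvd]; exact key h
  · exact key h

theorem Pi.adjoin_singleton_eq_top_of_isUnit_sub {ι R : Type*} [Fintype ι] [DecidableEq ι]
    [CommRing R] (y : ι → R) (hy : Pairwise fun i j => IsUnit (y i - y j)) :
    Algebra.adjoin R {y} = ⊤ := by
  have hy_mem : y ∈ Algebra.adjoin R {y} := Algebra.self_mem_adjoin_singleton R y
  have single_mem : ∀ i, Pi.single i (∏ j ∈ Finset.univ.erase i, (y i - y j)) ∈
      Algebra.adjoin R {y} := by
    intro i
    have h_eq : Pi.single i (∏ j ∈ Finset.univ.erase i, (y i - y j)) =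
        ∏ j ∈ Finset.univ.erase i, (y - algebraMap R (ι → R) (y j)) := by
      ext k
      rw [Finset.prod_apply]
      by_cases hk : k = i
      · subst hk; simp
      · rw [Pi.single_eq_of_ne hk]
        exact (Finset.prod_eq_zero (Finset.mem_erase.mpr ⟨hk, Finset.mem_univ k⟩)
          (sub_self _)).symm
    rw [h_eq]
    exact Subalgebra.prod_mem _ fun j _ =>
      Subalgebra.sub_mem _ hy_mem (Subalgebra.algebraMap_mem _ _)
  refine eq_top_iff.mpr fun v _ => ?_
  rw [← Finset.univ_sum_single v]
  refine Subalgebra.sum_mem _ fun i _ => ?_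
  have hu : IsUnit (∏ j ∈ Finset.univ.erase i, (y i - y j)) :=
    IsUnit.prod_iff.mpr fun j hj => hy (Finset.ne_of_mem_erase hj).symm
  have h_eq : Pi.single i (v i) =
      (v i * hu.unit⁻¹) • Pi.single i (∏ j ∈ Finset.univ.erase i, (y i - y j)) := by
    rw [← Pi.single_smul, smul_eq_mul, mul_assoc, hu.val_inv_mul, mul_one]
  rw [h_eq]
  exact Subalgebra.smul_mem _ (single_mem i) _

theorem MvPolynomial.faithfullyFlat_localizationAway {σ A : Type*} [CommRing A]
    (f : MvPolynomial σ A)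
    (hf : ∀ p : Ideal A, p.IsPrime → map (Ideal.Quotient.mk p) f ≠ 0) :
    Module.FaithfullyFlat A (Localization.Away f) := by
  have : Module.Flat A (Localization.Away f) :=
    Module.Flat.trans A (MvPolynomial σ A) (Localization.Away f)
  refine .of_comap_surjective fun p => ?_
  -- the kernel of `A[X]_f → Frac((A ⧸ p)[X])` is a prime of `A[X]_f` above `p`
  let K := FractionRing (MvPolynomial σ (A ⧸ p.asIdeal))
  let g : MvPolynomial σ A →+* K := (algebraMap _ K).comp (map (Ideal.Quotient.mk p.asIdeal))
  have hg : IsUnit (g f) := isUnit_iff_ne_zero.mpr <|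
    (map_ne_zero_iff _ (IsFractionRing.injective _ K)).mpr (hf _ p.isPrime)
  let φ := IsLocalization.Away.lift f (S := Localization.Away f) hg
  refine ⟨⟨RingHom.ker φ, RingHom.ker_isPrime φ⟩, PrimeSpectrum.ext ?_⟩
  change (RingHom.ker φ).comap (algebraMap A (Localization.Away f)) = p.asIdeal
  rw [RingHom.comap_ker, IsScalarTower.algebraMap_eq A (MvPolynomial σ A), ← RingHom.comp_assoc,
    IsLocalization.Away.lift_comp, RingHom.comp_assoc, MvPolynomial.algebraMap_eq, map_comp_C,
    RingHom.ker_comp_of_injective _ (IsFractionRing.injective _ K),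
    RingHom.ker_comp_of_injective _ (C_injective σ _), Ideal.mk_ker]

theorem Algebra.IsLocallySimple.pi_of_isUnit_sub {A A' : Type u} [CommRing A] [CommRing A']
    [Algebra A A'] [Module.FaithfullyFlat A A'] {n : ℕ} (y : Fin n → A')
    (hy : Pairwise fun i j => IsUnit (y i - y j)) : Algebra.IsLocallySimple A (Fin n → A) := by
  let e := Algebra.TensorProduct.piScalarRight A A' A' (Fin n)
  refine ⟨A', inferInstance, inferInstance, inferInstance, e.symm y, ?_⟩
  have h := AlgHom.map_adjoin_singleton e.symm.toAlgHom y
  rw [Pi.adjoin_singleton_eq_top_of_isUnit_sub y hy, Algebra.map_top,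
    (AlgHom.range_eq_top _).mpr e.symm.surjective] at h
  exact h.symm

/-- For every commutative ring `A` and every `n`, the diagonal `A`-algebra `A^n`
is locally simple. -/
theorem isLocallySimple_pi (A : Type u) [CommRing A] (n : ℕ) :
    Algebra.IsLocallySimple A (Fin n → A) := by
  let D := (Matrix.vandermonde (MvPolynomial.X : Fin n → MvPolynomial (Fin n) A)).det
  have : Module.FaithfullyFlat A (Localization.Away D) := by
    refine MvPolynomial.faithfullyFlat_localizationAway D fun p _ => ?_
    have hD : MvPolynomial.map (Ideal.Quotient.mk p) D =
        (Matrix.vandermonde MvPolynomial.X).det := by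
      simp [D, Matrix.det_vandermonde]
    rw [hD]
    exact Matrix.det_vandermonde_ne_zero_iff.mpr fun i j h => MvPolynomial.X_injective h
  refine .pi_of_isUnit_sub
    (fun i => algebraMap (MvPolynomial (Fin n) A) (Localization.Away D) (.X i)) fun i j hij => ?_
  dsimp only
  rw [← map_sub]
  exact isUnit_of_dvd_unit (map_dvd _ (Matrix.sub_dvd_det_vandermonde _ hij))
    (IsLocalization.Away.algebraMap_isUnit D)
end

section
/- Let A be a commutative ring and let P(T), Q(T) ∈ A[T] be monic polynomials. Let R(X) ∈ A[X] be the resultant in T of P(T+X) and Q(T), and let A' = A[X]_{R(X)} be the localization of A[X] at the multiplicative set generated by R(X). Then the canonical morphism A → A' is faithfully flat. -/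
universe u

variable {A : Type u} [CommRing A]

/-- The Sylvester matrix of two polynomials `f`, `g` with respect to the sizes `m`, `n`
(intended to be the degrees of `f` and `g` respectively): it is the `(n + m) × (n + m)`
matrix whose first `n` rows carry the successively shifted coefficients of `f` and whose
last `m` rows carry the successively shifted coefficients of `g`. -/
noncomputable def Polynomial.sylvesterMatrix (f g : Polynomial A) (m n : ℕ) :
    Matrix (Fin (n + m)) (Fin (n + m)) A :=
  Matrix.of fun i j =>
    Fin.addCases (motive := fun _ => A)
      (fun i' : Fin n => if (i' : ℕ) ≤ (j : ℕ) then f.coeff ((j : ℕ) - (i' : ℕ)) else 0)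
      (fun i' : Fin m => if (i' : ℕ) ≤ (j : ℕ) then g.coeff ((j : ℕ) - (i' : ℕ)) else 0) i

/-- The resultant of two polynomials `f` and `g`: the determinant of their Sylvester
matrix (formed with respect to their degrees). -/
noncomputable def Polynomial.sylvesterResultant (f g : Polynomial A) : A :=
  (Polynomial.sylvesterMatrix f g f.natDegree g.natDegree).det

/-!
Specialising `X` to a point `x` of an algebraically closed field `K` under `A` turns `R` into the
resultant of `Q(T)` and `P(T + x)`, which is nonzero as soon as `x` avoids the finitely many
differences of a root of `P` and a root of `Q`. So `R` vanishes identically on no geometric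
fibre of `Spec A[X] → Spec A`, and every prime of `A` lies under a prime of `A[X]_R`; flatness
holds because `A[X]` is free over `A`.
-/

open Polynomial Matrix

namespace Polynomial

lemma sylvesterMatrix_eq_transpose_sylvester {f g : A[X]} {m n : ℕ} (hf : f.natDegree ≤ m)
    (hg : g.natDegree ≤ n) : sylvesterMatrix f g m n = (sylvester g f n m)ᵀ := by
  ext i j
  induction i using Fin.addCases with
  | left i =>
    simp only [sylvesterMatrix, sylvester, transpose_apply, of_apply, Fin.addCases_left,
      Set.mem_Icc]
    split_ifs <;> first | rfl | omega | exact coeff_eq_zero_of_natDegree_lt (by omega)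
  | right i =>
    simp only [sylvesterMatrix, sylvester, transpose_apply, of_apply, Fin.addCases_right,
      Set.mem_Icc]
    split_ifs <;> first | rfl | omega | exact coeff_eq_zero_of_natDegree_lt (by omega)

lemma sylvesterResultant_eq_resultant (f g : A[X]) : sylvesterResultant f g = resultant g f := by
  rw [sylvesterResultant, sylvesterMatrix_eq_transpose_sylvester le_rfl le_rfl, det_transpose,
    resultant]

lemma resultant_taylor_ne_zero {K : Type*} [Field K] [IsAlgClosed K] {f g : K[X]} {x : K}
    (hx : ∀ b, g.IsRoot b → ¬ f.IsRoot (b + x)) : resultant g (taylor x f) ≠ 0 := by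
  refine resultant_ne_zero _ _ ((isCoprime_iff_aeval_ne_zero_of_isAlgClosed K K _ _).2 fun b => ?_)
  rw [coe_aeval_eq_eval, taylor_eval, ← not_and_or]
  exact fun h => hx b h.1 h.2

lemma exists_resultant_taylor_ne_zero {K : Type*} [Field K] [IsAlgClosed K] {f g : K[X]}
    (hf : f ≠ 0) (hg : g ≠ 0) : ∃ x, resultant g (taylor x f) ≠ 0 := by
  classical
  obtain ⟨x, hx⟩ := Infinite.exists_notMem_finset
    ((f.roots ×ˢ g.roots).map fun ab => ab.1 - ab.2).toFinset
  refine ⟨x, resultant_taylor_ne_zero fun b hb hbx => hx ?_⟩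
  rw [Multiset.mem_toFinset, Multiset.mem_map]
  exact ⟨(b + x, b), Multiset.mem_product.2 ⟨(mem_roots hf).2 hbx, (mem_roots hg).2 hb⟩,
    add_sub_cancel_left b x⟩

lemma eval₂_resultant_taylor_X {K : Type*} [CommRing K] [Nontrivial K] (φ : A →+* K) (x : K)
    {P Q : A[X]} (hP : P.Monic) (hQ : Q.Monic) :
    (resultant (Q.map C) (taylor X (P.map C))).eval₂ φ x =
      resultant (Q.map φ) (taylor x (P.map φ)) := by
  have := φ.domain_nontrivial
  rw [← coe_eval₂RingHom, ← resultant_map_map, map_map, map_taylor, map_map, eval₂RingHom_comp_C,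
    coe_eval₂RingHom, eval₂_X, natDegree_taylor, natDegree_taylor, hP.natDegree_map,
    hP.natDegree_map, hQ.natDegree_map, hQ.natDegree_map]

lemma exists_isPrime_comap_eq_ker {K : Type*} [Field K] {f : A[X]} {φ : A →+* K} {x : K}
    (hx : f.eval₂ φ x ≠ 0) :
    ∃ q : Ideal (Localization.Away f), q.IsPrime ∧
      q.comap (algebraMap A (Localization.Away f)) = RingHom.ker φ := by
  let ψ := IsLocalization.Away.lift (S := Localization.Away f) f (g := eval₂RingHom φ x)
    (Ne.isUnit hx)
  have hψ : ψ.comp (algebraMap A (Localization.Away f)) = φ := by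
    rw [IsScalarTower.algebraMap_eq A A[X], ← RingHom.comp_assoc, IsLocalization.Away.lift_comp]
    exact eval₂RingHom_comp_C φ x
  exact ⟨RingHom.ker ψ, RingHom.ker_isPrime ψ, by rw [RingHom.comap_ker, hψ]⟩

theorem faithfullyFlat_localization_away_of_eval₂_ne_zero (f : A[X])
    (hf : ∀ (K : Type u) [Field K] [IsAlgClosed K] (φ : A →+* K), ∃ x, f.eval₂ φ x ≠ 0) :
    Module.FaithfullyFlat A (Localization.Away f) := by
  have : Module.Flat A (Localization.Away f) := Module.Flat.trans A A[X] _
  refine Module.FaithfullyFlat.of_comap_surjective fun ⟨p, hp⟩ => ?_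
  let K := AlgebraicClosure p.ResidueField
  have hker : RingHom.ker (algebraMap A K) = p := by
    rw [IsScalarTower.algebraMap_eq A p.ResidueField K, RingHom.ker_comp_of_injective _
      (algebraMap p.ResidueField K).injective, Ideal.ker_algebraMap_residueField]
  obtain ⟨x, hx⟩ := hf K (algebraMap A K)
  obtain ⟨q, hq, hqp⟩ := exists_isPrime_comap_eq_ker hx
  exact ⟨⟨q, hq⟩, PrimeSpectrum.ext (hqp.trans hker)⟩

end Polynomial

/-- Let `P, Q ∈ A[T]` be monic, let `R(X) ∈ A[X]` be the resultant in `T` of `P(T+X)` and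
`Q(T)`, and let `A' = A[X]_{R(X)}`.  Then `A → A'` is faithfully flat. -/
theorem faithfullyFlat_localization_away_resultant (P Q : Polynomial A)
    (hP : P.Monic) (hQ : Q.Monic) :
    Module.FaithfullyFlat A
      (Localization.Away
        (Polynomial.sylvesterResultant
          ((P.map Polynomial.C).comp (Polynomial.X + Polynomial.C Polynomial.X))
          (Q.map Polynomial.C))) := by
  refine faithfullyFlat_localization_away_of_eval₂_ne_zero _ fun K _ _ φ => ?_
  obtain ⟨x, hx⟩ := exists_resultant_taylor_ne_zero (hP.map φ).ne_zero (hQ.map φ).ne_zero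
  refine ⟨x, ?_⟩
  rwa [← taylor_apply, sylvesterResultant_eq_resultant, eval₂_resultant_taylor_X φ x hP hQ]
end

section
/- Let A → B be a finite morphism of commutative rings (B finitely generated as an A-module), and suppose there exists a commutative A-algebra E such that E ⊗_A B is a simple E-algebra. Then there exists an A-subalgebra F ⊆ E of finite type (finitely generated as an A-algebra) such that F ⊗_A B is a simple F-algebra. -/
/-!
`E` is the directed union of its finitely generated `A`-subalgebras, and `- ⊗[A] B` commutes with
this union. So a generator `x` of `E ⊗[A] B` comes from some `y ∈ F₀ ⊗[A] B` with `F₀` finitely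
generated. Fix finitely many algebra generators `b` of `B`. Each `1 ⊗ b` is a polynomial in `x`
over `E`; after adjoining its coefficients to `F₀`, the relation becomes an equation in
`F₁ ⊗[A] B` that holds after mapping to `E ⊗[A] B`, hence already holds in `F' ⊗[A] B` for a
larger finitely generated `F'`. Doing this for each of the finitely many `b` gives an `F` over
which every `1 ⊗ b` is a polynomial in the image of `y`, and the `1 ⊗ b` generate `F ⊗[A] B` as
an `F`-algebra.
-/

open TensorProduct Polynomial

universe u

namespace Algebra.TensorProduct

variable {A S S' B : Type*} [CommSemiring A] [CommSemiring S] [CommSemiring S'] [CommSemiring B]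
  [Algebra A S] [Algebra A S'] [Algebra A B]

theorem eq_top_of_one_tmul_mem {s : Set B} (hs : Algebra.adjoin A s = ⊤)
    {T : Subalgebra S (S ⊗[A] B)} (h : ∀ b ∈ s, (1 : S) ⊗ₜ[A] b ∈ T) : T = ⊤ := by
  have hB : (⊤ : Subalgebra A B).map includeRight ≤ T.restrictScalars A := by
    rw [← hs, AlgHom.map_adjoin, Algebra.adjoin_le_iff]
    rintro _ ⟨b, hb, rfl⟩
    exact h b hb
  refine Algebra.eq_top_iff.mpr fun t => ?_
  induction t with
  | zero => exact zero_mem T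
  | tmul a b => simpa [smul_tmul'] using T.smul_mem (hB ⟨b, trivial, rfl⟩) a
  | add t t' ht ht' => exact add_mem ht ht'

theorem rTensor_aeval (f : S →ₐ[A] S') (y : S ⊗[A] B) (p : S[X]) :
    rTensor B f (aeval y p) = aeval (rTensor B f y) (p.map (f : S →+* S')) := by
  rw [aeval_def, aeval_def, eval₂_map, ← AlgHom.coe_toRingHom, hom_eval₂]
  congr 1

theorem rTensor_mem_adjoin (f : S →ₐ[A] S') {y z : S ⊗[A] B} (hz : z ∈ Algebra.adjoin S {y}) :
    rTensor B f z ∈ Algebra.adjoin S' {rTensor B f y} := by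
  rw [Algebra.adjoin_singleton_eq_range_aeval] at hz
  obtain ⟨p, rfl⟩ := (AlgHom.mem_range _).mp hz
  rw [rTensor_aeval]
  exact aeval_mem_adjoin_singleton S' _

end Algebra.TensorProduct

namespace Subalgebra

open Algebra.TensorProduct

variable {A B E : Type*} [CommSemiring A] [CommSemiring B] [CommSemiring E] [Algebra A B]
  [Algebra A E] {F F' F'' : Subalgebra A E}

@[simp]
theorem rTensor_inclusion_rTensor_inclusion (h : F ≤ F') (h' : F' ≤ F'') (y : F ⊗[A] B) :
    rTensor B (inclusion h') (rTensor B (inclusion h) y) =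
      rTensor B (inclusion (h.trans h')) y := by
  induction y with
  | zero => simp only [map_zero]
  | tmul a b => rfl
  | add y y' hy hy' => simp only [map_add, hy, hy']

@[simp]
theorem rTensor_val_rTensor_inclusion (h : F ≤ F') (y : F ⊗[A] B) :
    rTensor B F'.val (rTensor B (inclusion h) y) = rTensor B F.val y := by
  induction y with
  | zero => simp only [map_zero]
  | tmul a b => rfl
  | add y y' hy hy' => simp only [map_add, hy, hy']

theorem exists_fg_le_forall {ι : Type*} (P : ι → Subalgebra A E → Prop)
    (hmono : ∀ i, Monotone (P i)) (hcofinal : ∀ i G, G.FG → ∃ G', G ≤ G' ∧ G'.FG ∧ P i G')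
    (s : Finset ι) (hF : F.FG) : ∃ F', F ≤ F' ∧ F'.FG ∧ ∀ i ∈ s, P i F' := by
  induction s using Finset.cons_induction with
  | empty => exact ⟨F, le_rfl, hF, by simp⟩
  | cons i s his ih =>
    obtain ⟨F₁, hle₁, hF₁, hs⟩ := ih
    obtain ⟨F₂, hle₂, hF₂, hi⟩ := hcofinal i F₁ hF₁
    exact ⟨F₂, hle₁.trans hle₂, hF₂,
      (Finset.forall_mem_cons his _).mpr ⟨hi, fun j hj => hmono j hle₂ (hs j hj)⟩⟩

theorem exists_fg_rTensor_inclusion_mem_adjoin (hF : F.FG) {y z : F ⊗[A] B}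
    (h : rTensor B F.val z ∈ Algebra.adjoin E {rTensor B F.val y}) :
    ∃ (F' : Subalgebra A E) (hle : F ≤ F'), F'.FG ∧
      rTensor B (inclusion hle) z ∈ Algebra.adjoin F' {rTensor B (inclusion hle) y} := by
  rw [Algebra.adjoin_singleton_eq_range_aeval] at h
  obtain ⟨p, hp⟩ := (AlgHom.mem_range _).mp h
  set F₁ := F ⊔ Algebra.adjoin A (p.coeffs : Set E)
  have hle₁ : F ≤ F₁ := le_sup_left
  obtain ⟨q, hq⟩ : p ∈ lifts (algebraMap F₁ E) := by
    refine lifts_iff_coeff_lifts p |>.mpr fun n => ?_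
    by_cases hn : p.coeff n = 0
    · exact ⟨0, by simp [hn]⟩
    · exact ⟨⟨_, le_sup_right (a := F) (Algebra.subset_adjoin (coeff_mem_coeffs hn))⟩, rfl⟩
  have heq : rTensor B F₁.val (aeval (rTensor B (inclusion hle₁) y) q) =
      rTensor B F₁.val (rTensor B (inclusion hle₁) z) := by
    rw [rTensor_aeval, rTensor_val_rTensor_inclusion, rTensor_val_rTensor_inclusion, ← hp, ← hq]
    rfl
  obtain ⟨F', hle', hF', heq'⟩ :=
    TensorProduct.Algebra.eq_of_fg_of_subtype_eq (hF.sup (fg_adjoin_finset _)) heq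
  change rTensor B (inclusion hle') _ = rTensor B (inclusion hle') _ at heq'
  refine ⟨F', hle₁.trans hle', hF', ?_⟩
  rw [← rTensor_inclusion_rTensor_inclusion hle₁ hle',
    ← rTensor_inclusion_rTensor_inclusion hle₁ hle', ← heq']
  exact rTensor_mem_adjoin _ (aeval_mem_adjoin_singleton _ _)

end Subalgebra

open Algebra.TensorProduct Subalgebra

/-- If `B` is a finite `A`-algebra and `E` is an `A`-algebra such that `E ⊗[A] B` is a
simple (monogenic) `E`-algebra, then there is a finitely generated `A`-subalgebra
`F ⊆ E` such that `F ⊗[A] B` is a simple `F`-algebra. -/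
theorem exists_fg_subalgebra_tensor_simple {A B E : Type u} [CommRing A] [CommRing B]
    [Algebra A B] [Module.Finite A B] [CommRing E] [Algebra A E]
    (h : ∃ x : E ⊗[A] B, Algebra.adjoin E {x} = ⊤) :
    ∃ F : Subalgebra A E, F.FG ∧ ∃ x : F ⊗[A] B, Algebra.adjoin F {x} = ⊤ := by
  obtain ⟨x, hx⟩ := h
  obtain ⟨F₀, hF₀, y₀, rfl⟩ := TensorProduct.Algebra.exists_of_fg x
  change Algebra.adjoin E {rTensor B F₀.val y₀} = ⊤ at hx
  obtain ⟨s, hs⟩ := Algebra.FiniteType.out (R := A) (A := B)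
  let P (b : B) (F : Subalgebra A E) : Prop :=
    ∃ hle : F₀ ≤ F, (1 : F) ⊗ₜ[A] b ∈ Algebra.adjoin F {rTensor B (inclusion hle) y₀}
  have hmono (b : B) : Monotone (P b) := fun F F' hFF' ⟨hle, hb⟩ =>
    ⟨hle.trans hFF', by simpa using rTensor_mem_adjoin (inclusion hFF') hb⟩
  have hcofinal (b : B) (F : Subalgebra A E) (hF : F.FG) : ∃ F', F ≤ F' ∧ F'.FG ∧ P b F' := by
    obtain ⟨F', hle, hF', hb⟩ := exists_fg_rTensor_inclusion_mem_adjoin (hF₀.sup hF)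
      (y := rTensor B (inclusion (le_sup_left : F₀ ≤ F₀ ⊔ F)) y₀) (z := 1 ⊗ₜ b)
      (by rw [rTensor_val_rTensor_inclusion, hx]; trivial)
    exact ⟨F', le_sup_right.trans hle, hF', le_sup_left.trans hle, by simpa using hb⟩
  obtain ⟨F, hle, hF, hP⟩ := exists_fg_le_forall P hmono hcofinal s hF₀
  exact ⟨F, hF, rTensor B (inclusion hle) y₀, eq_top_of_one_tmul_mem hs fun b hb => (hP b hb).2⟩
end

section
/- Let B be a finite A-algebra (finitely generated as an A-module). Suppose there exists a commutative A-algebra A' such that the induced map Spec(A') → Spec(A) is surjective (every prime ideal of A is the contraction of a prime ideal of A') and such that A' ⊗_A B is a simple A'-algebra. Then B is locally simple over A; that is, flatness of the base change is superfluous. -/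
open TensorProduct

universe u

/-! Write `B = ∑ A bᵢ`, let `ξ = ∑ Xᵢ ⊗ bᵢ` be the generic element of `A[X] ⊗ B` with
`A[X] = A[X₁, …, Xₙ]`, and let `I ⊆ A[X]` be the annihilator of `(A[X] ⊗ B) / A[X][ξ]`.
For a prime `p` of `A'` with residue field `κ`, the `κ`-algebra `κ ⊗ B` is generated by
some `∑ cᵢ ⊗ bᵢ`, a specialization of `ξ`; by Nakayama the finite module
`(A[X] ⊗ B) / A[X][ξ]` vanishes near the point `X = c`, so some element of `I` has a
coefficient outside `p ∩ A`. As `Spec A' → Spec A` is onto, the coefficients of the elements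
of `I` generate the unit ideal, and finitely many `gⱼ ∈ I` already do. Then
`G = ∑ gⱼ Tʲ ∈ A[X][T]` is nonzero modulo every maximal ideal of `A`, so `A[X][T][1/G]` is
faithfully flat over `A`, and `ξ` generates over it because `G ∈ I` becomes a unit. -/

theorem AlgEquiv.adjoin_singleton_eq_top_iff {S T U : Type*} [CommSemiring S] [Semiring T]
    [Semiring U] [Algebra S T] [Algebra S U] (e : T ≃ₐ[S] U) (x : T) :
    Algebra.adjoin S {e x} = ⊤ ↔ Algebra.adjoin S {x} = ⊤ := by
  have htop : (⊤ : Subalgebra S T).map (e : T →ₐ[S] U) = ⊤ := by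
    rw [Algebra.map_top, AlgHom.range_eq_top]; exact e.surjective
  rw [← htop, ← AlgEquiv.coe_toAlgHom, ← AlgHom.map_adjoin_singleton]
  exact (Subalgebra.map_injective e.injective).eq_iff

theorem TensorProduct.exists_sum_tmul_eq_of_span_eq_top {R S M ι : Type*} [CommRing R]
    [CommRing S] [Algebra R S] [AddCommGroup M] [Module R M] [Fintype ι] {b : ι → M}
    (hb : Submodule.span R (Set.range b) = ⊤) (y : S ⊗[R] M) :
    ∃ c : ι → S, ∑ i, c i ⊗ₜ[R] b i = y := by
  have hy : y ∈ (Submodule.span R (Set.range b)).baseChange S := by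
    rw [hb, Submodule.baseChange_top]; trivial
  rw [Submodule.baseChange_span, ← Set.range_comp,
    Submodule.mem_span_range_iff_exists_fun] at hy
  obtain ⟨c, hc⟩ := hy
  exact ⟨c, by simpa [smul_tmul'] using hc⟩

theorem Module.exists_mem_annihilator_algebraMap_ne_zero {R L Q : Type*} [CommRing R] [Field L]
    [Algebra R L] [AddCommGroup Q] [Module R Q] [Module.Finite R Q] [Subsingleton (L ⊗[R] Q)] :
    ∃ g ∈ Module.annihilator R Q, algebraMap R L g ≠ 0 := by
  set P := RingHom.ker (algebraMap R L)
  have : P.IsPrime := RingHom.ker_isPrime _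
  have hP : ⟨P, this⟩ ∉ Module.support R Q := by
    rw [Module.mem_support_iff_nontrivial_residueField_tensorProduct,
      not_nontrivial_iff_subsingleton]
    let _ : Algebra P.ResidueField L := (Ideal.ResidueField.lift P (algebraMap R L) le_rfl
      fun r hr => (Ne.isUnit (mt RingHom.mem_ker.mpr hr) : _)).toAlgebra
    have : IsScalarTower R P.ResidueField L :=
      .of_algebraMap_eq fun r => (Ideal.ResidueField.lift_algebraMap _ _ _ _ r).symm
    have : Subsingleton (L ⊗[P.ResidueField] (P.ResidueField ⊗[R] Q)) :=
      (AlgebraTensorModule.cancelBaseChange R P.ResidueField L L Q).toEquiv.subsingleton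
    exact Module.FaithfullyFlat.lTensor_reflects_triviality P.ResidueField L _
  rw [Module.mem_support_iff_of_finite] at hP
  simpa [SetLike.not_le_iff_exists, P] using hP

def Algebra.monogenicIdeal (R : Type*) {T : Type*} [CommRing R] [CommRing T] [Algebra R T]
    (x : T) : Ideal R :=
  Module.annihilator R (T ⧸ Subalgebra.toSubmodule (Algebra.adjoin R {x}))

theorem Algebra.mem_monogenicIdeal {R T : Type*} [CommRing R] [CommRing T] [Algebra R T]
    {x : T} {r : R} : r ∈ monogenicIdeal R x ↔ ∀ t : T, r • t ∈ adjoin R {x} := by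
  rw [monogenicIdeal, Module.mem_annihilator, (Submodule.mkQ_surjective _).forall]
  simp [← Submodule.Quotient.mk_smul]

namespace Algebra.TensorProduct

variable {R S T : Type*} [CommRing R] [CommRing S] [CommRing T] [Algebra R S] [Algebra R T]

theorem one_tmul_mem_adjoin_one_tmul {x t : T} (ht : t ∈ Algebra.adjoin R {x}) :
    (1 : S) ⊗ₜ[R] t ∈ Algebra.adjoin S {(1 : S) ⊗ₜ[R] x} := by
  have hle : (Algebra.adjoin R {x}).map (includeRight : T →ₐ[R] S ⊗[R] T) ≤
      (Algebra.adjoin S {(1 : S) ⊗ₜ[R] x}).restrictScalars R := by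
    rw [AlgHom.map_adjoin_singleton, includeRight_apply]
    exact Algebra.adjoin_singleton_le
      ((Subalgebra.mem_restrictScalars R).mpr (Algebra.self_mem_adjoin_singleton S _))
  exact hle (Subalgebra.mem_map.mpr ⟨t, ht, includeRight_apply t⟩)

theorem adjoin_one_tmul_eq_top_of_map_monogenicIdeal_eq_top (x : T)
    (h : (monogenicIdeal R x).map (algebraMap R S) = ⊤) :
    Algebra.adjoin S {(1 : S) ⊗ₜ[R] x} = ⊤ := by
  set W := Subalgebra.toSubmodule (Algebra.adjoin S {(1 : S) ⊗ₜ[R] x})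
  suffices hle : (monogenicIdeal R x).map (algebraMap R S) ≤ W.colon Set.univ by
    have h1 := Submodule.mem_colon.mp (hle (h ▸ Submodule.mem_top : (1 : S) ∈ _))
    exact Algebra.eq_top_iff.mpr fun z => by simpa [W] using h1 z trivial
  rw [Ideal.map_le_iff_le_comap]
  intro r hr
  rw [Ideal.mem_comap, Submodule.mem_colon]
  rintro z -
  induction z using TensorProduct.induction_on with
  | zero => simp
  | tmul s t =>
    have hrt : r • t ∈ Algebra.adjoin R {x} := mem_monogenicIdeal.mp hr t
    have hst : s ⊗ₜ[R] (r • t) = s • ((1 : S) ⊗ₜ[R] (r • t)) := by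
      rw [smul_tmul', smul_eq_mul, mul_one]
    rw [algebraMap_smul, ← tmul_smul, hst]
    exact W.smul_mem s (one_tmul_mem_adjoin_one_tmul hrt)
  | add z z' hz hz' => rw [smul_add]; exact W.add_mem hz hz'

theorem subsingleton_tensorProduct_quotient_adjoin_singleton (x : T)
    (h : Algebra.adjoin S {(1 : S) ⊗ₜ[R] x} = ⊤) :
    Subsingleton (S ⊗[R] (T ⧸ Subalgebra.toSubmodule (Algebra.adjoin R {x}))) := by
  set P := Subalgebra.toSubmodule (Algebra.adjoin R {x})
  have hrange : Algebra.adjoin S {(1 : S) ⊗ₜ[R] x} ≤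
      (map (AlgHom.id S S) (Algebra.adjoin R {x}).val).range :=
    Algebra.adjoin_singleton_le ⟨1 ⊗ₜ ⟨x, Algebra.self_mem_adjoin_singleton R x⟩, rfl⟩
  refine subsingleton_of_forall_eq 0 fun z => ?_
  obtain ⟨w, rfl⟩ := LinearMap.baseChange_surjective S P.mkQ_surjective z
  obtain ⟨v, rfl⟩ := (AlgHom.mem_range _).mp (hrange (h ▸ Algebra.mem_top : w ∈ _))
  induction v using TensorProduct.induction_on with
  | zero => simp
  | tmul s t =>
    have ht : P.mkQ t = 0 := (Submodule.Quotient.mk_eq_zero P).mpr t.2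
    simp [ht]
  | add v v' hv hv' => rw [map_add, map_add, hv, hv', add_zero]

theorem exists_adjoin_singleton_eq_top_of_adjoin_one_tmul_eq_top {A B : Type*} [CommRing A]
    [CommRing B] [Algebra A R] [Algebra A S] [Algebra A B] [IsScalarTower A R S]
    {x : R ⊗[A] B} (h : adjoin S {(1 : S) ⊗ₜ[R] x} = ⊤) :
    ∃ y : S ⊗[A] B, adjoin S {y} = ⊤ :=
  ⟨cancelBaseChange A R S S B (1 ⊗ₜ x), by rwa [AlgEquiv.adjoin_singleton_eq_top_iff]⟩

theorem exists_adjoin_singleton_eq_top_of_isScalarTower {A B : Type*} [CommRing A] [CommRing B]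
    [Algebra A R] [Algebra A S] [Algebra A B] [IsScalarTower A R S]
    (h : ∃ x : R ⊗[A] B, adjoin R {x} = ⊤) : ∃ y : S ⊗[A] B, adjoin S {y} = ⊤ := by
  obtain ⟨x, hx⟩ := h
  refine exists_adjoin_singleton_eq_top_of_adjoin_one_tmul_eq_top (x := x) ?_
  simpa using adjoin_one_tmul_image_eq_top (A := S) {x} hx

end Algebra.TensorProduct

noncomputable def genericElement (A : Type*) {B ι : Type*} [CommRing A] [CommRing B]
    [Algebra A B] [Fintype ι] (b : ι → B) : MvPolynomial ι A ⊗[A] B :=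
  ∑ i, MvPolynomial.X i ⊗ₜ b i

section GenericElement

variable {A B ι : Type*} [CommRing A] [CommRing B] [Algebra A B] [Fintype ι] {b : ι → B}

theorem exists_mem_monogenicIdeal_algebraMap_coeff_ne_zero {L : Type*} [Field L]
    [Algebra A L] (hb : Submodule.span A (Set.range b) = ⊤)
    (hL : ∃ y : L ⊗[A] B, Algebra.adjoin L {y} = ⊤) :
    ∃ g ∈ Algebra.monogenicIdeal (MvPolynomial ι A) (genericElement A b),
      ∃ d, algebraMap A L (g.coeff d) ≠ 0 := by
  obtain ⟨y, hy⟩ := hL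
  obtain ⟨c, rfl⟩ := TensorProduct.exists_sum_tmul_eq_of_span_eq_top hb y
  let _ := (MvPolynomial.aeval (R := A) c).toAlgebra
  have : IsScalarTower A (MvPolynomial ι A) L :=
    .of_algebraMap_eq fun a => (MvPolynomial.aeval_C c a).symm
  have hgen : Algebra.adjoin L {(1 : L) ⊗ₜ[MvPolynomial ι A] genericElement A b} = ⊤ := by
    rw [← AlgEquiv.adjoin_singleton_eq_top_iff
      (Algebra.TensorProduct.cancelBaseChange A (MvPolynomial ι A) L L B)]
    convert hy
    simp [genericElement, tmul_sum, Algebra.smul_def, RingHom.algebraMap_toAlgebra]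
  have := Algebra.TensorProduct.subsingleton_tensorProduct_quotient_adjoin_singleton _ hgen
  have : Module.Finite A B := ⟨hb ▸ Submodule.fg_span (Set.finite_range b)⟩
  obtain ⟨g, hg, hgL⟩ := Module.exists_mem_annihilator_algebraMap_ne_zero
    (R := MvPolynomial ι A) (L := L) (Q := MvPolynomial ι A ⊗[A] B ⧸
      Subalgebra.toSubmodule (Algebra.adjoin (MvPolynomial ι A) {genericElement A b}))
  refine ⟨g, hg, ?_⟩
  by_contra! h0
  refine hgL ?_
  change MvPolynomial.aeval c g = 0
  simp [MvPolynomial.aeval_def, MvPolynomial.eval₂_eq, h0]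

theorem exists_mem_monogenicIdeal_coeff_notMem_comap {A' : Type*} [CommRing A']
    [Algebra A A'] (hb : Submodule.span A (Set.range b) = ⊤)
    (hsimple : ∃ x : A' ⊗[A] B, Algebra.adjoin A' {x} = ⊤) (p : Ideal A') [p.IsPrime] :
    ∃ g ∈ Algebra.monogenicIdeal (MvPolynomial ι A) (genericElement A b),
      ∃ d, g.coeff d ∉ p.comap (algebraMap A A') := by
  obtain ⟨g, hg, d, hd⟩ := exists_mem_monogenicIdeal_algebraMap_coeff_ne_zero
    (L := p.ResidueField) hb
    (Algebra.TensorProduct.exists_adjoin_singleton_eq_top_of_isScalarTower hsimple)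
  refine ⟨g, hg, d, fun hgd => hd ?_⟩
  rw [IsScalarTower.algebraMap_apply A A', Ideal.algebraMap_residueField_eq_zero]
  exact hgd

end GenericElement

theorem MvPolynomial.exists_mem_map_C_forall_coeff_coeff_notMem {A σ : Type*} [CommRing A]
    (I : Ideal (MvPolynomial σ A))
    (hI : ∀ m : Ideal A, m.IsMaximal → ∃ g ∈ I, ∃ d, g.coeff d ∉ m) :
    ∃ G ∈ I.map (Polynomial.C : MvPolynomial σ A →+* _),
      ∀ m : Ideal A, m.IsMaximal → ∃ j d, (G.coeff j).coeff d ∉ m := by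
  set coeffs := {a : A | ∃ g ∈ I, ∃ d, g.coeff d = a}
  have hspan : Ideal.span coeffs = ⊤ := by
    by_contra hne
    obtain ⟨m, hm, hle⟩ := Ideal.exists_le_maximal _ hne
    obtain ⟨g, hg, d, hd⟩ := hI m hm
    exact hd (hle (Ideal.subset_span ⟨g, hg, d, rfl⟩))
  obtain ⟨n, r, a, hsum⟩ :=
    Submodule.mem_span_set'.mp (hspan ▸ Submodule.mem_top : (1 : A) ∈ Ideal.span coeffs)
  choose g hgI d hd using fun i => (a i).2
  refine ⟨∑ i, Polynomial.C (g i) * Polynomial.X ^ (i : ℕ),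
    sum_mem fun i _ => Ideal.mul_mem_right _ _ (Ideal.mem_map_of_mem _ (hgI i)), fun m hm => ?_⟩
  obtain ⟨i, hi⟩ : ∃ i, (a i : A) ∉ m := by
    by_contra! h
    exact hm.ne_top ((Ideal.eq_top_iff_one _).mpr
      (hsum ▸ sum_mem fun i _ => m.mul_mem_left _ (h i)))
  refine ⟨i, d i, ?_⟩
  simpa [Polynomial.finsetSum_coeff, Polynomial.coeff_C_mul_X_pow, Fin.val_inj, hd] using hi

theorem Polynomial.pow_notMem_map_algebraMap_of_coeff_coeff_notMem {A σ : Type*} [CommRing A]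
    {m : Ideal A} [m.IsPrime] {G : Polynomial (MvPolynomial σ A)} {j : ℕ} {d : σ →₀ ℕ}
    (hG : (G.coeff j).coeff d ∉ m) (k : ℕ) :
    G ^ k ∉ m.map (algebraMap A (Polynomial (MvPolynomial σ A))) := by
  set φ := Polynomial.mapRingHom (MvPolynomial.map (Ideal.Quotient.mk m) (σ := σ))
  have hker : m.map (algebraMap A (Polynomial (MvPolynomial σ A))) ≤ RingHom.ker φ :=
    Ideal.map_le_iff_le_comap.mpr fun a ha => by
      simp [φ, Polynomial.algebraMap_apply, Ideal.Quotient.eq_zero_iff_mem.mpr ha]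
  have hφ : φ G ≠ 0 := fun h => hG <| by
    simpa [φ, MvPolynomial.coeff_map, Ideal.Quotient.eq_zero_iff_mem]
      using congrArg (fun p => (p.coeff j).coeff d) h
  exact fun hk => pow_ne_zero k hφ (by simpa [φ] using hker hk)

theorem Localization.Away.faithfullyFlat_of_pow_notMem_map {A R : Type*} [CommRing A]
    [CommRing R] [Algebra A R] [Module.Flat A R] (f : R)
    (hf : ∀ m : Ideal A, m.IsMaximal → ∀ k : ℕ, f ^ k ∉ m.map (algebraMap A R)) :
    Module.FaithfullyFlat A (Localization.Away f) := by
  have : Module.Flat A (Localization.Away f) := Module.Flat.trans A R _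
  refine ⟨fun m hm => ?_⟩
  rw [Ideal.smul_top_eq_map, IsScalarTower.algebraMap_eq A R, ← Ideal.map_map]
  refine (Submodule.restrictScalars_eq_top_iff _ _ _).ne.mpr ?_
  rw [IsLocalization.map_algebraMap_ne_top_iff_disjoint (Submonoid.powers f), Set.disjoint_left]
  rintro _ ⟨k, rfl⟩
  exact hf m hm k

/-- If `B` is a finite `A`-algebra and there is an `A`-algebra `A'` with
`Spec A' → Spec A` surjective such that `A' ⊗[A] B` is a simple `A'`-algebra, then `B`
is locally simple over `A` (flatness of the base change is superfluous). -/
theorem isLocallySimple_of_specSurjective_simple {A B : Type u} [CommRing A] [CommRing B]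
    [Algebra A B] [Module.Finite A B] (A' : Type u) [CommRing A'] [Algebra A A']
    (hsurj : Function.Surjective (PrimeSpectrum.comap (algebraMap A A')))
    (hsimple : ∃ x : A' ⊗[A] B, Algebra.adjoin A' {x} = ⊤) :
    Algebra.IsLocallySimple A B := by
  obtain ⟨n, b, hb⟩ := Module.Finite.exists_fin (R := A) (M := B)
  set R := MvPolynomial (Fin n) A
  have hI : ∀ m : Ideal A, m.IsMaximal →
      ∃ g ∈ Algebra.monogenicIdeal R (genericElement A b), ∃ d, g.coeff d ∉ m := by
    intro m hm
    obtain ⟨p, hp⟩ := hsurj ⟨m, hm.isPrime⟩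
    have hpm : p.asIdeal.comap (algebraMap A A') = m := congrArg PrimeSpectrum.asIdeal hp
    exact hpm ▸ exists_mem_monogenicIdeal_coeff_notMem_comap hb hsimple p.asIdeal
  obtain ⟨G, hGI, hG⟩ := MvPolynomial.exists_mem_map_C_forall_coeff_coeff_notMem _ hI
  have : Module.Flat A (Polynomial R) := Module.Flat.trans A R _
  refine ⟨Localization.Away G, inferInstance, inferInstance,
    Localization.Away.faithfullyFlat_of_pow_notMem_map G fun m hm k => ?_, ?_⟩
  · obtain ⟨j, d, hjd⟩ := hG m hm
    exact Polynomial.pow_notMem_map_algebraMap_of_coeff_coeff_notMem hjd k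
  · refine Algebra.TensorProduct.exists_adjoin_singleton_eq_top_of_adjoin_one_tmul_eq_top
      (Algebra.TensorProduct.adjoin_one_tmul_eq_top_of_map_monogenicIdeal_eq_top
        (genericElement A b) ?_)
    rw [IsScalarTower.algebraMap_eq R (Polynomial R), ← Ideal.map_map, Polynomial.algebraMap_eq]
    exact Ideal.eq_top_of_isUnit_mem _ (Ideal.mem_map_of_mem _ hGI)
      (IsLocalization.Away.algebraMap_isUnit G)
end

section
/- Let A be a commutative ring, n ≥ 1, S = A[T_1, …, T_n] the polynomial ring, and consider the element ξ = (T_1, …, T_n) of the product ring S^n, viewed as an S-algebra via the diagonal. Then the characteristic polynomial of multiplication by ξ on the free S-module S^n equals ∏_{i=1}^n (X − T_i), and the S-algebra morphism S[X]/(∏_{i=1}^n (X − T_i)) → S^n sending X to (T_1, …, T_n) is injective. -/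
/-!
In the standard basis of `S^n`, multiplication by `ξ = (T_1, …, T_n)` is the diagonal matrix
with entries `T_i`, which gives the characteristic polynomial. For the kernel: a polynomial
vanishing at every `T_i` is divisible by `∏ i, (X - T_i)`, peeling off one factor `X - T_a` at a
time, because the differences `T_i - T_a` are non-zero-divisors of `S`.
-/

universe u

open scoped nonZeroDivisors

namespace MvPolynomial

theorem X_sub_X_mem_nonZeroDivisors {σ R : Type*} [CommRing R] [DecidableEq σ]
    {i j : σ} (hij : i ≠ j) : (X i - X j : MvPolynomial σ R) ∈ (MvPolynomial σ R)⁰ := by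
  -- the substitution `X i ↦ X i + X j` is an automorphism sending `X i - X j` to `X i`
  let shift (c : MvPolynomial σ R) : MvPolynomial σ R →ₐ[R] MvPolynomial σ R :=
    aeval (Function.update X i (X i + c))
  have hinv : (shift (-X j)).comp (shift (X j)) = AlgHom.id R _ := by
    ext k
    rcases eq_or_ne k i with rfl | hk
    · simp [shift, hij.symm]
    · simp [shift, hk]
  have hinj : Function.Injective (shift (X j)) := Function.LeftInverse.injective (g := shift (-X j))
    fun p => by rw [← AlgHom.comp_apply, hinv, AlgHom.id_apply]
  refine mem_nonZeroDivisors_of_injective hinj ?_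
  simpa [shift, hij.symm] using isRegular_iff_mem_nonZeroDivisors.mp isRegular_X

end MvPolynomial

namespace Polynomial

theorem prod_X_sub_C_dvd_of_isRoot {R ι : Type*} [CommRing R] {ξ : ι → R}
    {s : Finset ι} (hξ : (s : Set ι).Pairwise fun i j => ξ i - ξ j ∈ R⁰) {p : R[X]}
    (hp : ∀ i ∈ s, p.IsRoot (ξ i)) : ∏ i ∈ s, (X - C (ξ i)) ∣ p := by
  classical
  induction s using Finset.induction_on generalizing p with
  | empty => simp
  | insert a s ha ih =>
    obtain ⟨q, rfl⟩ := dvd_iff_isRoot.mpr (hp a (Finset.mem_insert_self a s))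
    rw [Finset.prod_insert ha]
    refine mul_dvd_mul_left _ (ih (hξ.mono (by simp)) fun i hi => ?_)
    have hroot := hp i (Finset.mem_insert_of_mem hi)
    rw [IsRoot, eval_mul, eval_sub, eval_X, eval_C] at hroot
    exact (mul_left_mem_nonZeroDivisors_eq_zero_iff
      (hξ (by simp [hi]) (by simp) (ne_of_mem_of_not_mem hi ha))).mp hroot

theorem ker_aeval_pi {R ι : Type*} [CommRing R] [Fintype ι] (ξ : ι → R)
    (hξ : Pairwise fun i j => ξ i - ξ j ∈ R⁰) :
    RingHom.ker (aeval ξ : R[X] →ₐ[R] ι → R) = Ideal.span {∏ i, (X - C (ξ i))} := by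
  ext p
  rw [RingHom.mem_ker, Ideal.mem_span_singleton, aeval_pi_apply, funext_iff]
  refine ⟨fun hp => prod_X_sub_C_dvd_of_isRoot (fun i _ j _ hij => hξ hij) fun i _ => ?_,
    fun ⟨q, hq⟩ i => ?_⟩
  · simpa using hp i
  · rw [hq, map_mul, map_prod, Finset.prod_eq_zero (Finset.mem_univ i) (by simp), zero_mul,
      Pi.zero_apply]

end Polynomial

theorem LinearMap.charpoly_mulLeft_pi {R ι : Type*} [CommRing R] [Fintype ι] (ξ : ι → R) :
    (LinearMap.mulLeft R ξ).charpoly = ∏ i, (Polynomial.X - Polynomial.C (ξ i)) := by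
  classical
  have hdiag : LinearMap.mulLeft R ξ = Matrix.toLin' (Matrix.diagonal ξ) := by
    ext v i
    simp [Matrix.mulVec_diagonal]
  rw [hdiag, Matrix.charpoly_toLin', Matrix.charpoly_diagonal]

theorem charpoly_generic_diagonal_and_kronecker_injective_general {A : Type u} [CommRing A]
    (n : ℕ) :
    (LinearMap.mulLeft (MvPolynomial (Fin n) A)
        (fun i => MvPolynomial.X i : Fin n → MvPolynomial (Fin n) A)).charpoly =
      ∏ i : Fin n, (Polynomial.X - Polynomial.C (MvPolynomial.X i)) ∧
    RingHom.ker
        (Polynomial.aeval (fun i => MvPolynomial.X i : Fin n → MvPolynomial (Fin n) A) :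
          Polynomial (MvPolynomial (Fin n) A) →ₐ[MvPolynomial (Fin n) A]
            (Fin n → MvPolynomial (Fin n) A)) =
      Ideal.span {∏ i : Fin n, (Polynomial.X - Polynomial.C (MvPolynomial.X i))} :=
  ⟨LinearMap.charpoly_mulLeft_pi _,
    Polynomial.ker_aeval_pi _ fun _ _ hij => MvPolynomial.X_sub_X_mem_nonZeroDivisors hij⟩

/-- For `S = A[T_1, …, T_n]` and the element `ξ = (T_1, …, T_n)` of the diagonal
`S`-algebra `S^n`, the characteristic polynomial of multiplication by `ξ` on the free
`S`-module `S^n` is `∏ i, (X - T_i)`, and the `S`-algebra morphism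
`S[X]/(∏ i (X - T_i)) → S^n`, `X ↦ (T_1, …, T_n)`, is well defined and injective:
the kernel of evaluation at `ξ` is exactly the ideal generated by `∏ i, (X - T_i)`. -/
theorem charpoly_generic_diagonal_and_kronecker_injective {A : Type u} [CommRing A]
    (n : ℕ) (hn : 1 ≤ n) :
    (LinearMap.mulLeft (MvPolynomial (Fin n) A)
        (fun i => MvPolynomial.X i : Fin n → MvPolynomial (Fin n) A)).charpoly =
      ∏ i : Fin n, (Polynomial.X - Polynomial.C (MvPolynomial.X i)) ∧
    RingHom.ker
        (Polynomial.aeval (fun i => MvPolynomial.X i : Fin n → MvPolynomial (Fin n) A) :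
          Polynomial (MvPolynomial (Fin n) A) →ₐ[MvPolynomial (Fin n) A]
            (Fin n → MvPolynomial (Fin n) A)) =
      Ideal.span {∏ i : Fin n, (Polynomial.X - Polynomial.C (MvPolynomial.X i))} :=
  charpoly_generic_diagonal_and_kronecker_injective_general n
end

section
/- Let K → L be a finite field extension generated by a single element (L = K(x) for some x ∈ L), and let (e_1, …, e_n) be a K-basis of L. Then the polynomial F(T_1, …, T_n) = N_{K[T_1,…,T_n] ⊗_K L / K[T_1,…,T_n]}(T_1 ⊗ e_1 + ⋯ + T_n ⊗ e_n), i.e. the norm of the generic element T_1 e_1 + ⋯ + T_n e_n, is an irreducible element of the polynomial ring K[T_1, …, T_n]. -/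
/-!
The norm `F` of the generic element is the determinant of an `n × n` matrix of linear forms, so
its total degree is at most `n = [L : K]`. Restricted to the line `t ↦ t • 1 - x` (written in the
coordinates of `e`), `F` becomes the norm of `t ⊗ 1 - 1 ⊗ x`, the characteristic polynomial of `x`,
which equals `minpoly K x` because `x` generates `L`: it is irreducible of degree `n`. A
factorisation `F = G * H` restricts to a factorisation of `minpoly K x`, so one factor, say `G`,
restricts to a unit. Restriction to a line does not raise degrees, so
`deg G + deg H ≤ n ≤ deg H`, and `G` is a nonzero constant.
-/

open TensorProduct Polynomial

universe u

namespace MvPolynomial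

variable {σ : Type*}

theorem natDegree_aeval_le_totalDegree {R : Type*} [CommSemiring R] {f : σ → R[X]}
    (hf : ∀ i, (f i).natDegree ≤ 1) (p : MvPolynomial σ R) :
    (aeval f p).natDegree ≤ p.totalDegree := by
  conv_lhs => rw [p.as_sum, map_sum]
  refine natDegree_sum_le_of_forall_le _ _ fun d hd => ?_
  rw [aeval_monomial, Polynomial.algebraMap_apply]
  calc (Polynomial.C (coeff d p) * d.prod fun i k => f i ^ k).natDegree
      ≤ ∑ i ∈ d.support, (f i ^ d i).natDegree :=
        natDegree_C_mul_le _ _ |>.trans (natDegree_prod_le _ _)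
    _ ≤ ∑ i ∈ d.support, d i :=
        Finset.sum_le_sum fun i _ => natDegree_pow_le_of_le _ (hf i) |>.trans (mul_one _).le
    _ ≤ p.totalDegree := le_totalDegree hd

theorem totalDegree_det_le {ι : Type*} [Fintype ι] [DecidableEq ι] {R : Type*} [CommRing R]
    {M : Matrix ι ι (MvPolynomial σ R)} {d : ℕ} (hM : ∀ i j, (M i j).totalDegree ≤ d) :
    M.det.totalDegree ≤ Fintype.card ι * d := by
  rw [Matrix.det_apply]
  refine totalDegree_finsetSum_le fun τ _ => (totalDegree_smul_le _ _).trans ?_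
  calc (∏ i, M (τ i) i).totalDegree ≤ ∑ i, (M (τ i) i).totalDegree := totalDegree_finsetProd _ _
    _ ≤ ∑ _i : ι, d := Finset.sum_le_sum fun i _ => hM _ _
    _ = Fintype.card ι * d := by simp

variable {K : Type*} [Field K] {f : σ → K[X]}

theorem isUnit_of_isUnit_aeval_of_mul_eq (hf : ∀ i, (f i).natDegree ≤ 1)
    {F G H : MvPolynomial σ K} (hFGH : F = G * H) (hF : aeval f F ≠ 0)
    (hdeg : F.totalDegree ≤ (aeval f F).natDegree)
    (hG : IsUnit (aeval f G)) : IsUnit G := by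
  subst hFGH
  have hG0 : G ≠ 0 := by rintro rfl; simp at hF
  have hH0 : H ≠ 0 := by rintro rfl; simp at hF
  have hdeg' : G.totalDegree + H.totalDegree ≤ 0 + H.totalDegree :=
    calc G.totalDegree + H.totalDegree = (G * H).totalDegree :=
          (totalDegree_mul_of_isDomain hG0 hH0).symm
      _ ≤ (aeval f (G * H)).natDegree := hdeg
      _ ≤ (aeval f G).natDegree + (aeval f H).natDegree := by
          rw [map_mul]; exact natDegree_mul_le
      _ ≤ 0 + H.totalDegree := by
          gcongr
          · exact (natDegree_eq_zero_of_isUnit hG).le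
          · exact natDegree_aeval_le_totalDegree hf H
  have hGC : G = C (coeff 0 G) := totalDegree_eq_zero_iff_eq_C.mp (by omega)
  rw [hGC] at hG0 ⊢
  exact (isUnit_iff_ne_zero.mpr fun h => hG0 (by rw [h, map_zero])).map C

theorem irreducible_of_irreducible_aeval (hf : ∀ i, (f i).natDegree ≤ 1) {F : MvPolynomial σ K}
    (hF : Irreducible (aeval f F)) (hdeg : F.totalDegree ≤ (aeval f F).natDegree) :
    Irreducible F := by
  refine ⟨fun hu => hF.not_isUnit (hu.map _), fun G H hGH => ?_⟩
  rcases hF.isUnit_or_isUnit (by rw [hGH, map_mul]) with hG | hH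
  · exact .inl (isUnit_of_isUnit_aeval_of_mul_eq hf hGH hF.ne_zero hdeg hG)
  · exact .inr (isUnit_of_isUnit_aeval_of_mul_eq hf (hGH.trans (mul_comm G H)) hF.ne_zero hdeg hH)

end MvPolynomial

namespace Algebra

section Basis

variable {K L : Type*} [CommRing K] [CommRing L] [Algebra K L]
  {ι : Type*} [Fintype ι] [DecidableEq ι] (e : Module.Basis ι K L)

theorem leftMulMatrix_baseChange_tmul {A : Type*} [CommRing A] [Algebra K A] (a : A) (y : L) :
    leftMulMatrix (e.baseChange A) (a ⊗ₜ y) = a • (leftMulMatrix e y).map (algebraMap K A) := by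
  ext j k
  simp [leftMulMatrix_eq_repr_mul, Algebra.TensorProduct.tmul_mul_tmul, Algebra.smul_def, mul_comm]

theorem norm_sum_tmul_basis {A : Type*} [CommRing A] [Algebra K A] (a : ι → A) :
    norm A (∑ i, a i ⊗ₜ[K] e i : A ⊗[K] L) =
      (∑ i, a i • (leftMulMatrix e (e i)).map (algebraMap K A)).det := by
  simp only [norm_eq_matrix_det (e.baseChange A), map_sum, leftMulMatrix_baseChange_tmul]

theorem map_norm_sum_tmul_basis {A B : Type*} [CommRing A] [Algebra K A] [CommRing B]
    [Algebra K B] (ψ : A →ₐ[K] B) (a : ι → A) :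
    ψ (norm A (∑ i, a i ⊗ₜ[K] e i : A ⊗[K] L)) = norm B (∑ i, ψ (a i) ⊗ₜ[K] e i : B ⊗[K] L) := by
  rw [norm_sum_tmul_basis, norm_sum_tmul_basis, ← AlgHom.coe_toRingHom, RingHom.map_det]
  congr 1
  ext j k
  simp [Matrix.sum_apply]

theorem norm_X_tmul_one_sub_one_tmul (x : L) :
    norm K[X] (X ⊗ₜ[K] 1 - 1 ⊗ₜ[K] x : K[X] ⊗[K] L) = (leftMulMatrix e x).charpoly := by
  rw [norm_eq_matrix_det (e.baseChange K[X]), map_sub, leftMulMatrix_baseChange_tmul,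
    leftMulMatrix_baseChange_tmul, map_one, Matrix.map_one _ (map_zero _) (map_one _), one_smul,
    Matrix.charpoly, Matrix.charmatrix, Matrix.smul_one_eq_diagonal]
  rfl

end Basis

theorem charpoly_leftMulMatrix_eq_minpoly {K L : Type*} [Field K] [Field L] [Algebra K L]
    [FiniteDimensional K L] {ι : Type*} [Fintype ι] [DecidableEq ι] (e : Module.Basis ι K L)
    {x : L} (hx : IntermediateField.adjoin K {x} = ⊤) :
    (leftMulMatrix e x).charpoly = minpoly K x := by
  let pb := PowerBasis.ofAdjoinEqTop' (_root_.IsIntegral.of_finite K x)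
    (adjoin_eq_top_of_primitive_element (_root_.IsAlgebraic.of_finite K x) hx)
  have h := charpoly_leftMulMatrix pb
  rw [PowerBasis.ofAdjoinEqTop'_gen, leftMulMatrix_apply, LinearMap.charpoly_toMatrix] at h
  rwa [leftMulMatrix_apply, LinearMap.charpoly_toMatrix]

end Algebra

theorem Module.Basis.sum_repr_smul_tmul {R M N ι : Type*} [CommSemiring R] [Fintype ι]
    [AddCommMonoid M] [Module R M] [AddCommMonoid N] [Module R N] (b : Basis ι R N) (m : M)
    (y : N) : ∑ i, (b.repr y i • m) ⊗ₜ[R] b i = m ⊗ₜ y := by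
  simp_rw [smul_tmul, ← tmul_sum, b.sum_repr]

theorem MvPolynomial.totalDegree_norm_sum_X_tmul_le {K L ι : Type*} [CommRing K] [CommRing L]
    [Algebra K L] [Fintype ι] [DecidableEq ι] (e : Module.Basis ι K L) :
    (Algebra.norm (MvPolynomial ι K)
      (∑ i, X i ⊗ₜ[K] e i : MvPolynomial ι K ⊗[K] L)).totalDegree ≤ Fintype.card ι := by
  rw [Algebra.norm_sum_tmul_basis]
  refine (totalDegree_det_le (d := 1) fun j k => ?_).trans (mul_one _).le
  simp only [Matrix.sum_apply, Matrix.smul_apply, Matrix.map_apply, smul_eq_mul, algebraMap_eq]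
  refine totalDegree_finsetSum_le fun i _ => (totalDegree_mul _ _).trans ?_
  simpa [MvPolynomial.X] using totalDegree_monomial_le (R := K) (Finsupp.single i 1) 1

/-- Let `L/K` be a finite simple field extension (`L = K(x)`), and let `(e_1, …, e_n)` be
a `K`-basis of `L`.  Then the norm of the generic element,
`F(T_1, …, T_n) = N_{K[T_1,…,T_n] ⊗[K] L / K[T_1,…,T_n]}(Σ_i T_i ⊗ e_i)`,
is an irreducible element of `K[T_1, …, T_n]`. -/
theorem irreducible_norm_genericElement {K L : Type u} [Field K] [Field L] [Algebra K L]
    [FiniteDimensional K L] (x : L) (hx : IntermediateField.adjoin K {x} = ⊤)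
    {n : ℕ} (e : Module.Basis (Fin n) K L) :
    Irreducible (Algebra.norm (MvPolynomial (Fin n) K)
      (∑ i, MvPolynomial.X i ⊗ₜ[K] e i : MvPolynomial (Fin n) K ⊗[K] L)) := by
  let f : Fin n → K[X] := fun i => e.repr 1 i • X - e.repr x i • 1
  have hf : ∀ i, (f i).natDegree ≤ 1 := fun i =>
    (natDegree_sub_le _ _).trans <| max_le ((natDegree_smul_le _ _).trans natDegree_X_le)
      ((natDegree_smul_le _ _).trans (by simp))
  have hspec : MvPolynomial.aeval f (Algebra.norm (MvPolynomial (Fin n) K)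
      (∑ i, MvPolynomial.X i ⊗ₜ[K] e i : MvPolynomial (Fin n) K ⊗[K] L)) =
        (Algebra.leftMulMatrix e x).charpoly := by
    rw [Algebra.map_norm_sum_tmul_basis]
    simp only [MvPolynomial.aeval_X, f, sub_tmul, Finset.sum_sub_distrib,
      Module.Basis.sum_repr_smul_tmul]
    exact Algebra.norm_X_tmul_one_sub_one_tmul e x
  refine MvPolynomial.irreducible_of_irreducible_aeval hf ?_ ?_ <;> rw [hspec]
  · rw [Algebra.charpoly_leftMulMatrix_eq_minpoly e hx]
    exact minpoly.irreducible (IsIntegral.of_finite K x)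
  · simpa using MvPolynomial.totalDegree_norm_sum_X_tmul_le e
end
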